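/- For all natural numbers n ≥ 1, d with 0 ≤ d ≤ n, and k with 0 ≤ k ≤ d, we have ∑_{s=0}^{k} S₂(n−s, d−s)·(d−s)·S₁(d−s, k−s) = ∑_{s=0}^{d−k} (−1)^s · S₂(n+1, d−s) · S₁(d−s, k). -/

import Mathlib

/-- Unsigned Stirling numbers of the first kind:
`S1 (n+1) k = n * S1 n k + S1 n (k-1)`, `S1 0 0 = 1`. -/
def S1 : ℕ → ℕ → ℕ
  | 0, 0 => 1
  | 0, _ + 1 => 0
  | _ + 1, 0 => 0
  | n + 1, k + 1 => n * S1 n (k + 1) + S1 n k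

/-- Stirling numbers of the second kind:
`S2 (n+1) k = k * S2 n k + S2 n (k-1)`, `S2 0 0 = 1`. -/
def S2 : ℕ → ℕ → ℕ
  | 0, 0 => 1
  | 0, _ + 1 => 0
  | _ + 1, 0 => 0
  | n + 1, k + 1 => (k + 1) * S2 n (k + 1) + S2 n k

/-!
Induction on `k`. Splitting off the `s = 0` term of the left side reduces the claim to the
recursion `A (m+1) (d+1) (k+1) = A m d k + (d+1) S₂(m, d+1) S₁(d+1, k+1)` for the alternating
sum `A m d k = ∑ₛ (-1)^s S₂(m, d-s) S₁(d-s, k)` (the base case being `A (m+1) d 0 = 0`).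
Expanding `S₂(m+1, b+1) S₁(b+1, k+1)` by both recurrences, the difference of the two alternating
sums becomes `∑ₛ (-1)^s (g (b+1) + g b)` with `b = d - s` and `g b = b S₂(m, b) S₁(b, k+1)`;
this telescopes to `g (d+1) ± g k`, and `g k = 0`.
-/

open Finset

theorem S1_succ_succ (n k : ℕ) : S1 (n + 1) (k + 1) = n * S1 n (k + 1) + S1 n k := rfl

theorem S2_succ_succ (n k : ℕ) : S2 (n + 1) (k + 1) = (k + 1) * S2 n (k + 1) + S2 n k := rfl

theorem S1_eq_zero_of_lt {n k : ℕ} (h : n < k) : S1 n k = 0 := by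
  induction n generalizing k with
  | zero => obtain ⟨k, rfl⟩ := Nat.exists_eq_succ_of_ne_zero h.ne'; rfl
  | succ n ih =>
    obtain ⟨k, rfl⟩ := Nat.exists_eq_succ_of_ne_zero (Nat.zero_lt_of_lt h).ne'
    rw [S1_succ_succ, ih (by omega), ih (by omega), mul_zero]

theorem mul_S1_zero (n : ℕ) : n * S1 n 0 = 0 := by
  cases n <;> rfl

theorem S2_succ_mul_S1_zero (m b : ℕ) : S2 (m + 1) b * S1 b 0 = 0 := by
  cases b <;> rfl

theorem S2_succ_succ_mul_S1_succ_succ (m b k : ℕ) :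
    S2 (m + 1) (b + 1) * S1 (b + 1) (k + 1) =
      S2 m b * S1 b k +
        ((b + 1) * S2 m (b + 1) * S1 (b + 1) (k + 1) + b * S2 m b * S1 b (k + 1)) := by
  rw [S2_succ_succ, S1_succ_succ]
  ring

def altStirlingSum (m d k : ℕ) : ℤ :=
  ∑ s ∈ range (d - k + 1), (-1) ^ s * S2 m (d - s) * S1 (d - s) k

theorem altStirlingSum_succ_zero (m d : ℕ) : altStirlingSum (m + 1) d 0 = 0 :=
  sum_eq_zero fun s _ => by
    rw [mul_assoc, ← Nat.cast_mul, S2_succ_mul_S1_zero, Nat.cast_zero, mul_zero]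

theorem altStirlingSum_succ_succ_succ {m d k : ℕ} (hk : k ≤ d) :
    altStirlingSum (m + 1) (d + 1) (k + 1) =
      altStirlingSum m d k + (d + 1) * S2 m (d + 1) * S1 (d + 1) (k + 1) := by
  set g : ℕ → ℤ := fun b => b * S2 m b * S1 b (k + 1)
  have hterm : ∀ s ∈ range (d - k + 1),
      (-1) ^ s * S2 (m + 1) (d + 1 - s) * S1 (d + 1 - s) (k + 1) -
          (-1) ^ s * S2 m (d - s) * S1 (d - s) k =
        (-1) ^ s * g (d + 1 - s) - (-1) ^ (s + 1) * g (d + 1 - (s + 1)) := by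
    intro s hs
    have hsd : s ≤ d := by have := mem_range.mp hs; omega
    obtain ⟨b, hb⟩ : ∃ b, d - s = b := ⟨_, rfl⟩
    rw [show d + 1 - s = b + 1 by omega, show d + 1 - (s + 1) = b by omega, hb, mul_assoc,
      mul_assoc, ← Nat.cast_mul, ← Nat.cast_mul, S2_succ_succ_mul_S1_succ_succ]
    push_cast [g]
    ring
  have htel := sum_range_sub' (fun s => (-1 : ℤ) ^ s * g (d + 1 - s)) (d - k + 1)
  rw [← sum_congr rfl hterm, sum_sub_distrib, show d + 1 - (d - k + 1) = k by omega] at htel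
  have hgk : g k = 0 := by simp [g, S1_eq_zero_of_lt (Nat.lt_succ_self k)]
  rw [altStirlingSum, altStirlingSum, show d + 1 - (k + 1) = d - k by omega]
  simp only [hgk, mul_zero, sub_zero, pow_zero, one_mul, Nat.sub_zero, g] at htel
  push_cast at htel
  linarith

theorem stirling_identity_third_general (n d k : ℕ) (hd : d ≤ n) (hk : k ≤ d) :
    ∑ s ∈ Finset.range (k + 1),
        ((S2 (n - s) (d - s) : ℤ) * (d - s) * S1 (d - s) (k - s)) =
    ∑ s ∈ Finset.range (d - k + 1),
        (-1 : ℤ) ^ s * S2 (n + 1) (d - s) * S1 (d - s) k := by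
  change _ = altStirlingSum (n + 1) d k
  induction k generalizing n d with
  | zero =>
    rw [altStirlingSum_succ_zero, sum_range_one, Nat.sub_zero, Nat.sub_zero, Nat.cast_zero,
      sub_zero, mul_assoc]
    exact_mod_cast mul_eq_zero_of_right _ (mul_S1_zero d)
  | succ k ih =>
    obtain ⟨d, rfl⟩ := Nat.exists_eq_add_one_of_ne_zero (by omega : d ≠ 0)
    obtain ⟨n, rfl⟩ := Nat.exists_eq_add_one_of_ne_zero (by omega : n ≠ 0)
    rw [altStirlingSum_succ_succ_succ (by omega), ← ih n d (by omega) (by omega), sum_range_succ']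
    congr 1
    · refine sum_congr rfl fun s _ => ?_
      simp only [Nat.add_sub_add_right, Nat.cast_add, Nat.cast_one, add_sub_add_right_eq_sub]
    · push_cast
      ring

theorem stirling_identity_third (n d k : ℕ) (hn : 1 ≤ n) (hd : d ≤ n) (hk : k ≤ d) :
    ∑ s ∈ Finset.range (k + 1),
        ((S2 (n - s) (d - s) : ℤ) * (d - s) * S1 (d - s) (k - s)) =
    ∑ s ∈ Finset.range (d - k + 1),
        (-1 : ℤ) ^ s * S2 (n + 1) (d - s) * S1 (d - s) k :=
  stirling_identity_third_general n d k hd hk
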